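/- arXiv:1005.4303 — 3 statements merged into one kernel-verified Lean document; each statement's English description precedes it below -/
import Mathlib

section
/- Let Γ be an infinite set and let (a,b) and (a',b') be two admissible pairs of functions on Γ. Then B(Γ,a,b) is homeomorphic to a retract of B(Γ,a',b'). -/
/-!
It suffices to find a continuous `s : B(Γ,a,b) → B(Γ,a',b')` with a continuous left inverse `r`:
then `s ∘ r` retracts `B(Γ,a',b')` onto the image of `s`, which is homeomorphic to `B(Γ,a,b)`.

Countable `Γ` (indexed by `ℕ`): truncating a point of the cube `∏ [a n, b n]` greedily, so that the
partial sums of `|x n|` never exceed `1`, retracts the cube onto `B(ℕ,a,b)`. The cube is affinely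
homeomorphic to a cube `∏ [0, β n]` with `∑ β n ≤ 1` and `β n ≤ b'`, which sits in `B(Γ,a',b')` as a
retract: extend by zero, clamp back.

Uncountable `Γ`: split `x` into positive and negative parts, a point of the positive part of the
unit ball over `Γ × Bool`. The level sets of `⌈1 / b'⌉₊` are countably many, so `|Γ|` disjoint
finite blocks of coordinates with `∑ b' ≥ 1` fit inside the infinite ones. Spreading each part over
its own block in proportion to `b'` is undone by summing over the block.
-/

open Set Filter Topology

noncomputable section

/-- `Ball ι` is the "hilbertian ball" `B(ι) = {x ∈ ℝ^ι : ∑_i |x i| ≤ 1}` (expressed via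
finite partial sums), carrying the topology inherited from the product topology on `ι → ℝ`. -/
def Ball (ι : Type*) : Set (ι → ℝ) :=
  {x | ∀ s : Finset ι, ∑ i ∈ s, |x i| ≤ 1}

/-- `BallAB ι a b` is `B(ι,a,b) = {x ∈ ℝ^ι : ∑_i |x i| ≤ 1 and a i ≤ x i ≤ b i for all i}`. -/
def BallAB (ι : Type*) (a b : ι → ℝ) : Set (ι → ℝ) :=
  {x | x ∈ Ball ι ∧ ∀ i, a i ≤ x i ∧ x i ≤ b i}

/-- A pair `(a,b)` is admissible if `-1 ≤ a i ≤ 0 < b i ≤ 1` and `|a i| ≤ |b i|` for all `i`. -/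
def Admissible {ι : Type*} (a b : ι → ℝ) : Prop :=
  ∀ i, -1 ≤ a i ∧ a i ≤ 0 ∧ 0 < b i ∧ b i ≤ 1 ∧ |a i| ≤ |b i|

def IsHomeoRetract (X Y : Type*) [TopologicalSpace X] [TopologicalSpace Y] : Prop :=
  ∃ (s : X → Y) (r : Y → X), Continuous s ∧ Continuous r ∧ Function.LeftInverse r s

namespace IsHomeoRetract

variable {X Y Z : Type*} [TopologicalSpace X] [TopologicalSpace Y] [TopologicalSpace Z]

theorem trans (hXY : IsHomeoRetract X Y) (hYZ : IsHomeoRetract Y Z) : IsHomeoRetract X Z := by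
  obtain ⟨s, r, hs, hr, hrs⟩ := hXY
  obtain ⟨s', r', hs', hr', hrs'⟩ := hYZ
  exact ⟨s' ∘ s, r ∘ r', hs'.comp hs, hr.comp hr', hrs'.comp hrs⟩

theorem of_mapsTo {S : Set X} {T : Set Y} {s : X → Y} {r : Y → X}
    (hs : Continuous s) (hr : Continuous r) (hST : MapsTo s S T) (hTS : MapsTo r T S)
    (hrs : ∀ x ∈ S, r (s x) = x) : IsHomeoRetract S T :=
  ⟨hST.restrict s S T, hTS.restrict r T S, hs.restrict hST, hr.restrict hTS,
    fun x => Subtype.ext (hrs x x.2)⟩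

theorem exists_retract_homeomorph (h : IsHomeoRetract X Y) :
    ∃ A : Set Y, (∃ r : Y → Y, Continuous r ∧ range r ⊆ A ∧ ∀ y ∈ A, r y = y) ∧
      Nonempty (X ≃ₜ A) := by
  obtain ⟨s, r, hs, hr, hrs⟩ := h
  refine ⟨range s, ⟨s ∘ r, hs.comp hr, range_comp_subset_range r s, ?_⟩,
    ⟨(hrs.isEmbedding hr hs).toHomeomorph⟩⟩
  rintro _ ⟨x, rfl⟩
  simp only [Function.comp_apply, hrs x]

end IsHomeoRetract

theorem comp_mem_Ball {ι κ : Type*} {f : κ → ι} (hf : Function.Injective f) {x : ι → ℝ}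
    (hx : x ∈ Ball ι) : x ∘ f ∈ Ball κ := fun s => by
  have := hx (s.map ⟨f, hf⟩)
  rwa [Finset.sum_map] at this

theorem mem_Ball_of_sum_range_le {x : ℕ → ℝ} (hx : ∀ n, ∑ k ∈ Finset.range n, |x k| ≤ 1) :
    x ∈ Ball ℕ := fun s => by
  obtain ⟨n, hn⟩ := s.exists_nat_subset_range
  exact (Finset.sum_le_sum_of_subset_of_nonneg hn fun _ _ _ => abs_nonneg _).trans (hx n)

theorem abs_le_one_of_mem_Ball {ι : Type*} {x : ι → ℝ} (hx : x ∈ Ball ι) (i : ι) : |x i| ≤ 1 := by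
  simpa using hx {i}

theorem BallAB.isHomeoRetract_comp_equiv {Γ Δ : Type*} (e : Γ ≃ Δ) (a b : Γ → ℝ) :
    IsHomeoRetract (BallAB Γ a b) (BallAB Δ (a ∘ e.symm) (b ∘ e.symm)) := by
  refine IsHomeoRetract.of_mapsTo (s := (· ∘ e.symm)) (r := (· ∘ e)) (by fun_prop) (by fun_prop)
    (fun x hx => ⟨comp_mem_Ball e.symm.injective hx.1, fun d => hx.2 (e.symm d)⟩)
    (fun y hy => ⟨comp_mem_Ball e.injective hy.1, fun i => by simpa using hy.2 (e i)⟩)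
    (fun x _ => by ext; simp)

def clamp (lo hi t : ℝ) : ℝ := max lo (min hi t)

section Clamp

variable {lo hi r t : ℝ}

@[fun_prop]
theorem continuous_clamp : Continuous (clamp lo hi) := by
  unfold clamp; fun_prop

theorem clamp_of_mem (ht : t ∈ Icc lo hi) : clamp lo hi t = t := by
  simp [clamp, ht.1, ht.2]

theorem clamp_mem (h : lo ≤ hi) : clamp lo hi t ∈ Icc lo hi :=
  ⟨le_max_left _ _, max_le h (min_le_left _ _)⟩

theorem abs_clamp_le (hlo : lo ≤ 0) (hhi : 0 ≤ hi) : |clamp lo hi t| ≤ |t| := by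
  unfold clamp
  rcases abs_cases t with ⟨_, _⟩ | ⟨_, _⟩ <;> grind

theorem abs_clamp_neg_self (hr : 0 ≤ r) : |clamp (-r) r t| = min |t| r := by
  unfold clamp
  rcases abs_cases t with ⟨_, _⟩ | ⟨_, _⟩ <;> grind

theorem clamp_mem_uIcc_zero (hr : 0 ≤ r) : clamp (-r) r t ∈ uIcc 0 t := by
  simp only [clamp, mem_uIcc]
  grind

end Clamp

-- The budget left for `w n` is read off `w` itself: the truncations of `w 0, …, w (n - 1)` use up
-- exactly `min 1 (∑ k < n, |w k|)` (`sum_abs_l1Truncate`).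
def l1Truncate (w : ℕ → ℝ) (n : ℕ) : ℝ :=
  clamp (-max 0 (1 - ∑ k ∈ Finset.range n, |w k|)) (max 0 (1 - ∑ k ∈ Finset.range n, |w k|)) (w n)

theorem sum_abs_l1Truncate (w : ℕ → ℝ) (n : ℕ) :
    ∑ k ∈ Finset.range n, |l1Truncate w k| = min 1 (∑ k ∈ Finset.range n, |w k|) := by
  induction n with
  | zero => simp
  | succ n ih =>
    rw [Finset.sum_range_succ, Finset.sum_range_succ, ih, l1Truncate,
      abs_clamp_neg_self (le_max_left _ _)]
    grind

theorem l1Truncate_mem_Ball (w : ℕ → ℝ) : l1Truncate w ∈ Ball ℕ :=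
  mem_Ball_of_sum_range_le fun n => (sum_abs_l1Truncate w n).trans_le (min_le_left _ _)

theorem l1Truncate_eq_self {w : ℕ → ℝ} (hw : w ∈ Ball ℕ) : l1Truncate w = w := by
  ext n
  refine clamp_of_mem (abs_le.1 ?_)
  have h := hw (Finset.range (n + 1))
  rw [Finset.sum_range_succ] at h
  exact le_max_of_le_right (by linarith)

@[fun_prop]
theorem continuous_l1Truncate : Continuous l1Truncate := by
  refine continuous_pi fun n => ?_
  unfold l1Truncate clamp
  fun_prop

theorem isHomeoRetract_ballAB_Icc {a b : ℕ → ℝ} (ha : a ≤ 0) (hb : 0 ≤ b) :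
    IsHomeoRetract (BallAB ℕ a b) (Icc a b) := by
  refine IsHomeoRetract.of_mapsTo continuous_id continuous_l1Truncate
    (fun x hx => ⟨fun n => (hx.2 n).1, fun n => (hx.2 n).2⟩) (fun w hw => ?_)
    (fun x hx => l1Truncate_eq_self hx.1)
  refine ⟨l1Truncate_mem_Ball w, fun n => ?_⟩
  have hsub : uIcc 0 (w n) ⊆ Icc (a n) (b n) := uIcc_subset_Icc ⟨ha n, hb n⟩ ⟨hw.1 n, hw.2 n⟩
  exact hsub (clamp_mem_uIcc_zero (le_max_left _ _))

def affineRescale {ι : Type*} (a b c d : ι → ℝ) (w : ι → ℝ) (i : ι) : ℝ :=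
  c i + (d i - c i) * ((w i - a i) / (b i - a i))

section AffineRescale

variable {ι : Type*} {a b c d : ι → ℝ}

@[fun_prop]
theorem continuous_affineRescale : Continuous (affineRescale a b c d) := by
  refine continuous_pi fun i => ?_
  unfold affineRescale
  fun_prop

theorem affineRescale_mapsTo (hab : a ≤ b) (hcd : c ≤ d) :
    MapsTo (affineRescale a b c d) (Icc a b) (Icc c d) := fun w hw => by
  have hu : ∀ i, (w i - a i) / (b i - a i) ∈ Icc (0 : ℝ) 1 := fun i =>
    ⟨div_nonneg (sub_nonneg.2 (hw.1 i)) (sub_nonneg.2 (hab i)),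
      div_le_one_of_le₀ (sub_le_sub_right (hw.2 i) _) (sub_nonneg.2 (hab i))⟩
  refine ⟨fun i => ?_, fun i => ?_⟩ <;> simp only [affineRescale]
  · nlinarith [(hu i).1, hcd i]
  · nlinarith [(hu i).2, hcd i]

theorem affineRescale_affineRescale (hab : ∀ i, a i < b i) (hcd : ∀ i, c i < d i) (w : ι → ℝ) :
    affineRescale c d a b (affineRescale a b c d w) = w := by
  ext i
  have h₁ := (sub_pos.2 (hab i)).ne'
  have h₂ := (sub_pos.2 (hcd i)).ne'
  simp only [affineRescale]
  field_simp
  ring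

theorem isHomeoRetract_Icc_Icc (hab : ∀ i, a i < b i) (hcd : ∀ i, c i < d i) :
    IsHomeoRetract (Icc a b) (Icc c d) :=
  IsHomeoRetract.of_mapsTo continuous_affineRescale continuous_affineRescale
    (affineRescale_mapsTo (fun i => (hab i).le) fun i => (hcd i).le)
    (affineRescale_mapsTo (fun i => (hcd i).le) fun i => (hab i).le)
    (fun w _ => affineRescale_affineRescale hab hcd w)

end AffineRescale

theorem isHomeoRetract_Icc_ballAB {ι Γ : Type*} {J : ι → Γ} (hJ : Function.Injective J)
    {β : ι → ℝ} (hβ0 : 0 ≤ β) (hβ : β ∈ Ball ι) {a' b' : Γ → ℝ} (ha' : a' ≤ 0) (hb' : 0 ≤ b')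
    (hβb' : ∀ i, β i ≤ b' (J i)) :
    IsHomeoRetract (Icc 0 β) (BallAB Γ a' b') := by
  refine IsHomeoRetract.of_mapsTo (s := fun w => Function.extend J w 0)
    (r := fun y i => clamp 0 (β i) (y (J i))) ?_ (by fun_prop)
    (fun w hw => ⟨fun S => ?_, fun j => ?_⟩)
    (fun y _ => ⟨fun i => (clamp_mem (hβ0 i)).1, fun i => (clamp_mem (hβ0 i)).2⟩)
    (fun w hw => funext fun i => by
      simp only [hJ.extend_apply]; exact clamp_of_mem ⟨hw.1 i, hw.2 i⟩)
  · refine continuous_pi fun j => ?_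
    by_cases hj : ∃ i, J i = j
    · obtain ⟨i, rfl⟩ := hj
      simp only [hJ.extend_apply]
      exact continuous_apply i
    · simp only [Function.extend_apply' _ _ _ hj]
      exact continuous_const
  · rw [← Finset.sum_preimage J S hJ.injOn _ fun j _ hj => by
      dsimp only; rw [Function.extend_apply' _ _ _ (by simpa using hj), Pi.zero_apply, abs_zero]]
    calc ∑ i ∈ S.preimage J hJ.injOn, |Function.extend J w 0 (J i)|
        ≤ ∑ i ∈ S.preimage J hJ.injOn, |β i| := Finset.sum_le_sum fun i _ => by
          rw [hJ.extend_apply, abs_of_nonneg (hw.1 i), abs_of_nonneg (hβ0 i)]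
          exact hw.2 i
      _ ≤ 1 := hβ _
  · dsimp only
    by_cases hj : ∃ i, J i = j
    · obtain ⟨i, rfl⟩ := hj
      rw [hJ.extend_apply]
      exact ⟨(ha' _).trans (hw.1 i), (hw.2 i).trans (hβb' i)⟩
    · rw [Function.extend_apply' _ _ _ hj]
      exact ⟨ha' j, hb' j⟩

theorem isHomeoRetract_Icc_ballAB_of_infinite {Γ : Type*} [Infinite Γ] {a b : ℕ → ℝ}
    (hab : ∀ n, a n < b n) {a' b' : Γ → ℝ} (ha' : a' ≤ 0) (hb' : ∀ j, 0 < b' j) :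
    IsHomeoRetract (Icc a b) (BallAB Γ a' b') := by
  let J := Infinite.natEmbedding Γ
  let β : ℕ → ℝ := fun n => min (b' (J n)) ((1 / 2) ^ (n + 1))
  have hβ0 : ∀ n, 0 < β n := fun n => lt_min (hb' _) (by positivity)
  have hβ : β ∈ Ball ℕ := mem_Ball_of_sum_range_le fun N =>
    calc ∑ n ∈ Finset.range N, |β n| ≤ ∑ n ∈ Finset.range N, (1 / 2 : ℝ) ^ n / 2 :=
          Finset.sum_le_sum fun n _ => by
            rw [abs_of_pos (hβ0 n)]
            exact (min_le_right _ _).trans_eq (by ring)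
      _ ≤ 1 := by
          rw [← Finset.sum_div, div_le_one two_pos]
          exact sum_geometric_two_le N
  exact (isHomeoRetract_Icc_Icc hab hβ0).trans
    (isHomeoRetract_Icc_ballAB J.injective (fun n => (hβ0 n).le) hβ ha' (fun j => (hb' j).le)
      fun n => min_le_left _ _)

theorem isHomeoRetract_ballAB_of_countable {Γ : Type*} [Countable Γ] [Infinite Γ]
    {a b a' b' : Γ → ℝ} (ha : a ≤ 0) (hb : ∀ i, 0 < b i) (ha' : a' ≤ 0) (hb' : ∀ j, 0 < b' j) :
    IsHomeoRetract (BallAB Γ a b) (BallAB Γ a' b') := by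
  obtain ⟨e⟩ : Nonempty (Γ ≃ ℕ) := nonempty_equiv_of_countable
  exact (BallAB.isHomeoRetract_comp_equiv e a b).trans
    ((isHomeoRetract_ballAB_Icc (fun n => ha _) (fun n => (hb _).le)).trans
      (isHomeoRetract_Icc_ballAB_of_infinite (fun n => (ha _).trans_lt (hb _)) ha' hb'))

def signParts {Γ : Type*} (x : Γ → ℝ) (p : Γ × Bool) : ℝ := cond p.2 (x p.1)⁺ (x p.1)⁻

section SignParts

variable {Γ : Type*}

theorem signParts_nonneg (x : Γ → ℝ) (p : Γ × Bool) : 0 ≤ signParts x p := by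
  rcases p with ⟨i, _ | _⟩
  exacts [negPart_nonneg _, posPart_nonneg _]

theorem sum_signParts (x : Γ → ℝ) (i : Γ) : ∑ s : Bool, signParts x (i, s) = |x i| := by
  simp only [Fintype.sum_bool, signParts, cond_true, cond_false]
  exact posPart_add_negPart (x i)

theorem signParts_le_abs (x : Γ → ℝ) (p : Γ × Bool) : signParts x p ≤ |x p.1| :=
  (Finset.single_le_sum (fun s _ => signParts_nonneg x (p.1, s)) (Finset.mem_univ p.2)).trans_eq
    (sum_signParts x p.1)

@[fun_prop]
theorem continuous_signParts : Continuous (signParts : (Γ → ℝ) → Γ × Bool → ℝ) := by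
  refine continuous_pi fun p => ?_
  rcases p with ⟨i, _ | _⟩ <;> simp only [signParts, cond_true, cond_false] <;> fun_prop

theorem isHomeoRetract_ballAB_signParts {a b : Γ → ℝ} (ha : a ≤ 0) (hb : 0 ≤ b) :
    IsHomeoRetract (BallAB Γ a b) (BallAB (Γ × Bool) 0 1) := by
  classical
  refine IsHomeoRetract.of_mapsTo (s := signParts)
    (r := fun v i => clamp (a i) (b i) (v (i, true) - v (i, false))) continuous_signParts
    (by fun_prop) (fun x hx => ⟨fun T => ?_, fun p => ?_⟩)
    (fun v hv => ⟨fun S => ?_, fun i => clamp_mem ((ha i).trans (hb i))⟩) (fun x hx => ?_)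
  · calc ∑ p ∈ T, |signParts x p| ≤ ∑ p ∈ T.image Prod.fst ×ˢ Finset.univ, signParts x p := by
          simp only [abs_of_nonneg (signParts_nonneg x _)]
          exact Finset.sum_le_sum_of_subset_of_nonneg
            (fun p hp => Finset.mem_product.2 ⟨Finset.mem_image_of_mem _ hp, Finset.mem_univ _⟩)
            fun p _ _ => signParts_nonneg x p
      _ = ∑ i ∈ T.image Prod.fst, |x i| := by
          simp only [Finset.sum_product, sum_signParts]
      _ ≤ 1 := hx.1 _
  · exact ⟨signParts_nonneg x p, (signParts_le_abs x p).trans (abs_le_one_of_mem_Ball hx.1 _)⟩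
  · calc ∑ i ∈ S, |clamp (a i) (b i) (v (i, true) - v (i, false))|
        ≤ ∑ i ∈ S, ∑ s : Bool, |v (i, s)| := Finset.sum_le_sum fun i _ => by
          rw [Fintype.sum_bool]
          exact (abs_clamp_le (ha i) (hb i)).trans (abs_sub _ _)
      _ = ∑ p ∈ S ×ˢ Finset.univ, |v p| := (Finset.sum_product S Finset.univ fun p => |v p|).symm
      _ ≤ 1 := hv.1 _
  · ext i
    simp only [signParts, cond_true, cond_false, posPart_sub_negPart]
    exact clamp_of_mem (hx.2 i)

end SignParts

-- `own j` is the index of the block containing `j`, if there is one.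
open Classical in
def spread {P Γ : Type*} (blk : P → Finset Γ) (own : Γ → P) (c : Γ → ℝ) (v : P → ℝ) (j : Γ) : ℝ :=
  if j ∈ blk (own j) then v (own j) * c j / ∑ k ∈ blk (own j), c k else 0

section Spread

variable {P Γ : Type*} {blk : P → Finset Γ} {own : Γ → P} {c : Γ → ℝ} {v : P → ℝ}

theorem spread_of_mem (hown : ∀ p, ∀ j ∈ blk p, own j = p) {p : P} {j : Γ} (hj : j ∈ blk p) :
    spread blk own c v j = v p * c j / ∑ k ∈ blk p, c k := by
  rw [spread, hown p j hj, if_pos hj]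

theorem sum_spread (hown : ∀ p, ∀ j ∈ blk p, own j = p) {p : P} (hp : ∑ k ∈ blk p, c k ≠ 0) :
    ∑ j ∈ blk p, spread blk own c v j = v p := by
  rw [Finset.sum_congr rfl fun j hj => spread_of_mem hown hj, ← Finset.sum_div,
    ← Finset.mul_sum, mul_div_assoc, div_self hp, mul_one]

theorem spread_nonneg (hc : 0 ≤ c) (hv : 0 ≤ v) (j : Γ) : 0 ≤ spread blk own c v j := by
  unfold spread
  split_ifs
  · exact div_nonneg (mul_nonneg (hv _) (hc j)) (Finset.sum_nonneg fun k _ => hc k)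
  · exact le_rfl

theorem spread_le (hc : 0 ≤ c) (hcap : ∀ p, 1 ≤ ∑ k ∈ blk p, c k) (hv : v ≤ 1) (j : Γ) :
    spread blk own c v j ≤ c j := by
  unfold spread
  split_ifs
  · have hv1 : v (own j) ≤ 1 := hv _
    rw [div_le_iff₀ (one_pos.trans_le (hcap _))]
    nlinarith [mul_nonneg (sub_nonneg.2 hv1) (hc j),
      mul_nonneg (hc j) (sub_nonneg.2 (hcap (own j)))]
  · exact hc j

theorem spread_mem_Ball (hown : ∀ p, ∀ j ∈ blk p, own j = p) (hc : 0 ≤ c)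
    (hcap : ∀ p, ∑ k ∈ blk p, c k ≠ 0) (hv0 : 0 ≤ v) (hv : v ∈ Ball P) :
    spread blk own c v ∈ Ball Γ := fun S => by
  classical
  have fiber_le (p : P) : ∑ j ∈ S with own j = p, spread blk own c v j ≤ v p := by
    rw [← sum_spread hown (v := v) (hcap p), ← Finset.sum_filter_of_ne (p := (· ∈ blk p))
      fun j hj hne => by
        by_contra hjp
        simp only [Finset.mem_filter] at hj
        exact hne (by rw [spread, hj.2, if_neg hjp])]
    exact Finset.sum_le_sum_of_subset_of_nonneg (fun j hj => (Finset.mem_filter.1 hj).2)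
      fun j _ _ => spread_nonneg hc hv0 j
  calc ∑ j ∈ S, |spread blk own c v j|
      = ∑ p ∈ S.image own, ∑ j ∈ S with own j = p, spread blk own c v j := by
        simp only [abs_of_nonneg (spread_nonneg hc hv0 _)]
        exact (Finset.sum_fiberwise_of_maps_to (fun j hj => Finset.mem_image_of_mem own hj) _).symm
    _ ≤ ∑ p ∈ S.image own, v p := Finset.sum_le_sum fun p _ => fiber_le p
    _ ≤ 1 := by simpa only [abs_of_nonneg (hv0 _)] using hv (S.image own)

end Spread

theorem isHomeoRetract_ballAB_of_blocks {P Γ : Type*} {blk : P → Finset Γ} {own : Γ → P}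
    (hown : ∀ p, ∀ j ∈ blk p, own j = p) {a' b' : Γ → ℝ} (ha' : a' ≤ 0) (hb' : 0 ≤ b')
    (hcap : ∀ p, 1 ≤ ∑ j ∈ blk p, b' j) :
    IsHomeoRetract (BallAB P 0 1) (BallAB Γ a' b') := by
  classical
  have hcap₀ : ∀ p, ∑ j ∈ blk p, b' j ≠ 0 := fun p => (one_pos.trans_le (hcap p)).ne'
  have hdisj : (Set.univ : Set P).PairwiseDisjoint blk := fun p _ q _ hpq =>
    Finset.disjoint_left.2 fun j hp hq => hpq ((hown p j hp).symm.trans (hown q j hq))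
  refine IsHomeoRetract.of_mapsTo (s := spread blk own b')
    (r := fun y p => clamp 0 1 (∑ j ∈ blk p, y j)) ?_ (by fun_prop)
    (fun v hv => ⟨spread_mem_Ball hown hb' hcap₀ (fun p => (hv.2 p).1) hv.1, fun j =>
      ⟨(ha' j).trans (spread_nonneg hb' (fun p => (hv.2 p).1) j),
        spread_le hb' hcap (fun p => (hv.2 p).2) j⟩⟩)
    (fun y hy => ⟨fun T => ?_, fun p => clamp_mem zero_le_one⟩)
    (fun v hv => funext fun p => by
      simp only [sum_spread hown (hcap₀ p)]; exact clamp_of_mem (hv.2 p))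
  · refine continuous_pi fun j => ?_
    unfold spread
    split_ifs <;> fun_prop
  · calc ∑ p ∈ T, |clamp 0 1 (∑ j ∈ blk p, y j)| ≤ ∑ p ∈ T, ∑ j ∈ blk p, |y j| :=
          Finset.sum_le_sum fun p _ =>
            (abs_clamp_le le_rfl zero_le_one).trans (Finset.abs_sum_le_sum_abs _ _)
      _ = ∑ j ∈ T.biUnion blk, |y j| := (Finset.sum_biUnion (hdisj.subset (subset_univ _))).symm
      _ ≤ 1 := hy.1 _

universe u

-- Only countably many points lie in finite level sets of `c`, so the infinite level sets carry
-- `#Γ` points, and an infinite level set `V` holds `#V` disjoint copies of `ℕ`.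
open Cardinal in
theorem exists_injective_prod_nat_of_uncountable {Γ P : Type u} [Uncountable Γ] (hP : #P ≤ #Γ)
    (c : Γ → ℕ) : ∃ (F : P × ℕ → Γ) (n : P → ℕ), Function.Injective F ∧ ∀ q, c (F q) = n q.1 := by
  let V : ℕ → Set Γ := fun n => c ⁻¹' {n}
  let E : Set Γ := {j | (V (c j)).Finite}
  have hE : E.Countable := by
    refine (Set.Countable.biUnion (Set.to_countable {n | (V n).Finite})
      fun n hn => Set.Finite.countable hn).mono fun j hj => ?_
    exact Set.mem_biUnion (x := c j) hj rfl
  have hEc : #(Eᶜ : Set Γ) = #Γ := mk_compl_of_infinite E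
    ((mk_le_aleph0_iff.2 hE.to_subtype).trans_lt (aleph0_lt_mk_iff.2 ‹_›))
  have hPV : #P ≤ #(Σ n : {n // (V n).Infinite}, V n) := by
    refine hP.trans (hEc.symm.le.trans (mk_le_of_injective
      (f := fun j : (Eᶜ : Set Γ) => ⟨⟨c j, j.2⟩, ⟨j, rfl⟩⟩) fun j j' h => ?_))
    exact Subtype.ext (congrArg (fun s => (s.2 : Γ)) h)
  obtain ⟨φ⟩ := (le_def _ _).1 hPV
  have e (n : {n // (V n).Infinite}) : V n × ℕ ↪ V n := by
    haveI := n.2.to_subtype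
    refine Classical.choice ((le_def _ _).1 ?_)
    rw [mk_prod, mk_nat, lift_uzero, lift_aleph0, mul_aleph0_eq (aleph0_le_mk _)]
  have e_inj : ∀ (s s' : Σ n : {n // (V n).Infinite}, V n) (k k' : ℕ),
      (e s.1 (s.2, k) : Γ) = e s'.1 (s'.2, k') → s = s' ∧ k = k' := by
    rintro ⟨n, u⟩ ⟨n', u'⟩ k k' h
    have hn : c (e n (u, k)) = n := (e n (u, k)).2
    have hn' : c (e n' (u', k')) = n' := (e n' (u', k')).2
    obtain rfl : n = n' := Subtype.ext (hn.symm.trans (h ▸ hn'))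
    obtain ⟨rfl, rfl⟩ := Prod.ext_iff.1 ((e n).injective (Subtype.ext h))
    exact ⟨rfl, rfl⟩
  refine ⟨fun q => e (φ q.1).1 ((φ q.1).2, q.2), fun p => (φ p).1, ?_, fun q => (e _ _).2⟩
  rintro ⟨p, k⟩ ⟨p', k'⟩ h
  obtain ⟨hφ, rfl⟩ := e_inj _ _ k k' h
  exact Prod.ext (φ.injective hφ) rfl

open Cardinal in
theorem exists_blocks_one_le_sum {Γ P : Type u} [Uncountable Γ] [Nonempty P] (hP : #P ≤ #Γ)
    {b : Γ → ℝ} (hb : ∀ j, 0 < b j) :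
    ∃ (blk : P → Finset Γ) (own : Γ → P), (∀ p, ∀ j ∈ blk p, own j = p) ∧
      ∀ p, 1 ≤ ∑ j ∈ blk p, b j := by
  obtain ⟨F, n, hF, hFn⟩ := exists_injective_prod_nat_of_uncountable hP fun j => ⌈(b j)⁻¹⌉₊
  have hbF (p : P) (k : ℕ) : (n p : ℝ)⁻¹ ≤ b (F (p, k)) ∧ (0 : ℝ) < n p := by
    have hq : (b (F (p, k)))⁻¹ ≤ n p := (hFn (p, k)).symm ▸ Nat.le_ceil _
    exact ⟨inv_le_of_inv_le₀ (hb _) hq, (inv_pos.2 (hb _)).trans_le hq⟩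
  refine ⟨fun p => (Finset.range (n p)).map
      ⟨fun k => F (p, k), fun k k' h => (Prod.ext_iff.1 (hF h)).2⟩,
    Function.extend F Prod.fst fun _ => Classical.arbitrary P, fun p j hj => ?_, fun p => ?_⟩
  · obtain ⟨k, -, rfl⟩ := Finset.mem_map.1 hj
    exact hF.extend_apply _ _ (p, k)
  · rw [Finset.sum_map]
    show 1 ≤ ∑ k ∈ Finset.range (n p), b (F (p, k))
    refine le_trans ?_ (Finset.card_nsmul_le_sum _ _ _ fun k _ => (hbF p k).1)
    rw [Finset.card_range, nsmul_eq_mul, mul_inv_cancel₀ (hbF p 0).2.ne']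

theorem isHomeoRetract_ballAB_of_uncountable {Γ : Type u} [Uncountable Γ] {a b a' b' : Γ → ℝ}
    (ha : a ≤ 0) (hb : 0 ≤ b) (ha' : a' ≤ 0) (hb' : ∀ j, 0 < b' j) :
    IsHomeoRetract (BallAB Γ a b) (BallAB Γ a' b') := by
  have hP : Cardinal.mk (Γ × Bool) ≤ Cardinal.mk Γ := by
    simpa using (Cardinal.mul_eq_left (Cardinal.aleph0_le_mk Γ)
      (Cardinal.ofNat_le_aleph0.trans (Cardinal.aleph0_le_mk Γ)) two_ne_zero).le
  obtain ⟨blk, own, hown, hcap⟩ := exists_blocks_one_le_sum hP hb'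
  exact (isHomeoRetract_ballAB_signParts ha hb).trans
    (isHomeoRetract_ballAB_of_blocks hown ha' (fun j => (hb' j).le) hcap)

/-- for infinite `Γ` and admissible pairs `(a,b)` and `(a',b')`,
`B(Γ,a,b)` is homeomorphic to a retract of `B(Γ,a',b')`. -/
theorem statement4 {Γ : Type*} [Infinite Γ] (a b a' b' : Γ → ℝ)
    (hab : Admissible a b) (hab' : Admissible a' b') :
    ∃ A : Set ↥(BallAB Γ a' b'),
      (∃ r : ↥(BallAB Γ a' b') → ↥(BallAB Γ a' b'), Continuous r ∧ Set.range r ⊆ A ∧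
        ∀ x ∈ A, r x = x) ∧
      Nonempty (↥(BallAB Γ a b) ≃ₜ ↥A) := by
  have ha : a ≤ 0 := fun i => (hab i).2.1
  have hb : ∀ i, 0 < b i := fun i => (hab i).2.2.1
  have ha' : a' ≤ 0 := fun i => (hab' i).2.1
  have hb' : ∀ i, 0 < b' i := fun i => (hab' i).2.2.1
  have h : IsHomeoRetract (BallAB Γ a b) (BallAB Γ a' b') := by
    by_cases hΓ : Countable Γ
    · exact isHomeoRetract_ballAB_of_countable ha hb ha' hb'
    · have : Uncountable Γ := not_countable_iff.1 hΓ
      exact isHomeoRetract_ballAB_of_uncountable ha (fun i => (hb i).le) ha' hb'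
  exact h.exists_retract_homeomorph

end
end

section
/- Let Γ be an uncountable set. Then the Banach space C(A(Γ)^ℕ) is isomorphic to a complemented subspace of C(B(Γ)^ℕ). -/
open Set Filter Topology

noncomputable section

theorem isCompact_ball (ι : Type*) : IsCompact (Ball ι) := by
  have hsub : Ball ι ⊆ Set.pi Set.univ (fun _ : ι => Set.Icc (-1:ℝ) 1) := by
    intro x hx i _
    have h := hx {i}
    simp only [Finset.sum_singleton] at h
    simpa [Set.mem_Icc] using abs_le.mp h
  have hclosed : IsClosed (Ball ι) := by
    have : Ball ι = ⋂ s : Finset ι, {x : ι → ℝ | ∑ i ∈ s, |x i| ≤ 1} := by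
      ext x; simp [Ball, Set.mem_iInter]
    rw [this]
    refine isClosed_iInter fun s => isClosed_le ?_ continuous_const
    exact continuous_finset_sum s fun i _ => (continuous_apply i).abs
  exact ((isCompact_univ_pi fun _ : ι => isCompact_Icc)).of_isClosed_subset hclosed hsub

instance Ball.compactSpace (ι : Type*) : CompactSpace (Ball ι) :=
  isCompact_iff_compactSpace.mp (isCompact_ball ι)

/-!
The vertices `∞ ↦ 0`, `γ ↦ e_γ` embed `A(Γ)` in `B(Γ)`. Restriction along this embedding,
taken coordinatewise, is a left inverse of any bounded linear extension operator
`C(A(Γ)^ℕ) → C(B(Γ)^ℕ)`, so it suffices to build one.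

For one coordinate take `Eφ(x) = φ(∞) + ∑_γ ramp (x_γ) • (φ(γ) - φ(∞))` with
`ramp t = max 0 (2t - 1)`. At most one coordinate of a point of `B(Γ)` exceeds `1/2`, so `Eφ(x)`
is a convex combination of two values of `φ`, and `Eφ` is continuous because `φ(γ) → φ(∞)`.
This works for vector-valued `φ`, so it can be applied to the first coordinate of a function on
`A(Γ)^ℕ`, viewed as a `C(B(Γ)^ℕ)`-valued function of that coordinate. Iterating gives norm-one
extension operators `E_n` of `f ∘ truncate ∞ n`; since `E_m f - E_n f = E_m (f - f ∘ truncate ∞ n)`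
and `f ∘ truncate ∞ n → f` uniformly, `E_n f` converges, and the limit is the extension operator.
-/

open OnePoint

theorem ENat.isClopen_Ioi_natCast (k : ℕ) : IsClopen (Ioi (k : ℕ∞)) := by
  refine ⟨?_, isOpen_Ioi⟩
  convert isClosed_Ici (a := (k : ℕ∞) + 1) using 1
  ext n
  exact (ENat.add_one_le_iff (ENat.natCast_ne_top k)).symm

theorem norm_tsum_sub_sum_le {ι V : Type*} [NormedAddCommGroup V] {F : ι → V}
    (hF : (Function.support F).Subsingleton) (s : Finset ι) {C : ℝ} (hC : 0 ≤ C)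
    (h : ∀ i ∉ s, ‖F i‖ ≤ C) : ‖∑' i, F i - ∑ i ∈ s, F i‖ ≤ C := by
  rcases hF.eq_empty_or_singleton with hF | ⟨i₀, hF⟩
  · simp [Function.support_eq_empty_iff.mp hF, hC]
  have hzero : ∀ i ≠ i₀, F i = 0 := fun i hi => Function.notMem_support.mp (hF ▸ hi)
  rw [tsum_eq_single i₀ hzero]
  by_cases hi₀ : i₀ ∈ s
  · simp [Finset.sum_eq_single_of_mem i₀ hi₀ fun i _ hi => hzero i hi, hC]
  · rw [Finset.sum_eq_zero fun i hi => hzero i (ne_of_mem_of_not_mem hi hi₀), sub_zero]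
    exact h i₀ hi₀

namespace ContinuousMap

variable {X Y E : Type*} [TopologicalSpace X] [TopologicalSpace Y] [LocallyCompactSpace X]
  [LocallyCompactSpace Y] [NormedAddCommGroup E] [NormedSpace ℝ E]

def curryCLM : C(X × Y, E) →L[ℝ] C(X, C(Y, E)) where
  toFun := curry
  map_add' _ _ := rfl
  map_smul' _ _ := rfl
  cont := continuous_curry

def uncurryCLM : C(X, C(Y, E)) →L[ℝ] C(X × Y, E) where
  toFun := uncurry
  map_add' _ _ := rfl
  map_smul' _ _ := rfl
  cont := continuous_uncurry

end ContinuousMap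

namespace PiNat

variable {X : Type*} [TopologicalSpace X]

def cons : C(X × (ℕ → X), ℕ → X) where
  toFun p k := Nat.casesOn k p.1 p.2
  continuous_toFun := continuous_pi fun k => by cases k <;> fun_prop

def headTail : C(ℕ → X, X × (ℕ → X)) where
  toFun x := (x 0, fun k => x (k + 1))

theorem cons_headTail (x : ℕ → X) : cons (headTail x) = x := by
  ext k; cases k <;> rfl

def truncate (x₀ : X) (n : ℕ) : C(ℕ → X, ℕ → X) where
  toFun y k := if k < n then y k else x₀
  continuous_toFun := continuous_pi fun k => by split_ifs <;> fun_prop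

theorem truncate_succ_cons (x₀ : X) (n : ℕ) (p : X × (ℕ → X)) :
    truncate x₀ (n + 1) (cons p) = cons (p.1, truncate x₀ n p.2) := by
  ext k; cases k <;> simp [truncate, cons]

theorem tendsto_comp_truncate {Z : Type*} [TopologicalSpace Z] (x₀ : X) (f : C(ℕ → X, Z)) :
    Tendsto (fun n => f.comp (truncate x₀ n)) atTop (𝓝 f) := by
  -- Truncation at `n ∈ ℕ∞` is jointly continuous and is the identity at `n = ⊤`.
  let T : C(ℕ∞ × (ℕ → X), ℕ → X) :=
    { toFun := fun p k => if (k : ℕ∞) < p.1 then p.2 k else x₀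
      continuous_toFun := continuous_pi fun k => by
        have hk : IsClopen {p : ℕ∞ × (ℕ → X) | (k : ℕ∞) < p.1} :=
          (ENat.isClopen_Ioi_natCast k).preimage continuous_fst
        exact Continuous.if (fun p hp => by simp [hk.frontier_eq] at hp) (by fun_prop)
          (by fun_prop) }
  have hT : ∀ n : ℕ, (f.comp T).curry n = f.comp (truncate x₀ n) := fun n => by
    ext y; simp [T, truncate]
  have hTop : (f.comp T).curry ⊤ = f := by ext y; simp [T]
  simpa [Function.comp_def, hT, hTop] using
    ((f.comp T).curry.continuous.tendsto ⊤).comp ENat.tendsto_natCast_nhds_top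

end PiNat

open PiNat

namespace Ball

def ramp (t : ℝ) : ℝ := max 0 (2 * t - 1)

theorem continuous_ramp : Continuous ramp := by unfold ramp; fun_prop

theorem ramp_nonneg (t : ℝ) : 0 ≤ ramp t := le_max_left _ _

theorem ramp_le_one {t : ℝ} (ht : t ≤ 1) : ramp t ≤ 1 := max_le zero_le_one (by linarith)

theorem ramp_eq_zero {t : ℝ} (ht : t ≤ 1 / 2) : ramp t = 0 := max_eq_left (by linarith)

theorem half_lt_of_ramp_ne_zero {t : ℝ} (ht : ramp t ≠ 0) : 1 / 2 < t :=
  lt_of_not_ge fun h => ht (ramp_eq_zero h)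

theorem ramp_one : ramp 1 = 1 := by norm_num [ramp]

variable {Γ : Type*}

theorem apply_le_one (x : Ball Γ) (γ : Γ) : x.1 γ ≤ 1 := by
  simpa using (le_abs_self _).trans (by simpa using x.2 {γ})

theorem subsingleton_support_ramp (x : Ball Γ) :
    (Function.support fun γ => ramp (x.1 γ)).Subsingleton := by
  classical
  intro γ hγ β hβ
  by_contra hne
  have h := x.2 {γ, β}
  rw [Finset.sum_pair hne] at h
  linarith [half_lt_of_ramp_ne_zero hγ, half_lt_of_ramp_ne_zero hβ, le_abs_self (x.1 γ),
    le_abs_self (x.1 β)]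

theorem zero_mem : (0 : Γ → ℝ) ∈ Ball Γ := fun s => by simp

theorem single_mem [DecidableEq Γ] (γ : Γ) : Pi.single γ 1 ∈ Ball Γ := by
  intro s
  simp only [Pi.single_apply, apply_ite, abs_one, abs_zero, Finset.sum_ite_eq']
  split_ifs <;> norm_num

open Classical in
def vertex (a : OnePoint Γ) : Ball Γ :=
  a.elim ⟨0, zero_mem⟩ fun γ => ⟨Pi.single γ 1, single_mem γ⟩

@[simp] theorem vertex_infty : (vertex (∞ : OnePoint Γ)).1 = 0 := rfl

@[simp] theorem vertex_coe_self (γ : Γ) : (vertex (γ : OnePoint Γ)).1 γ = 1 := by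
  simp [vertex]

theorem vertex_coe_of_ne {γ β : Γ} (h : β ≠ γ) : (vertex (γ : OnePoint Γ)).1 β = 0 := by
  simp [vertex, h]

section Extension

variable {V : Type*} [NormedAddCommGroup V] [NormedSpace ℝ V]

def extendFun (φ : OnePoint Γ → V) (x : Ball Γ) : V :=
  φ ∞ + ∑' γ, ramp (x.1 γ) • (φ γ - φ ∞)

theorem exists_extendFun_eq (x : Ball Γ) : ∃ a : OnePoint Γ, ∃ t ∈ Icc (0 : ℝ) 1,
    ∀ φ : OnePoint Γ → V, extendFun φ x = φ ∞ + t • (φ a - φ ∞) := by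
  rcases (subsingleton_support_ramp x).eq_empty_or_singleton with h | ⟨γ, h⟩
  · refine ⟨∞, 0, by simp, fun φ => ?_⟩
    have h0 : ∀ γ, ramp (x.1 γ) = 0 := congrFun (Function.support_eq_empty_iff.mp h)
    simp [extendFun, h0]
  · refine ⟨γ, ramp (x.1 γ), ⟨ramp_nonneg _, ramp_le_one (apply_le_one x γ)⟩, fun φ => ?_⟩
    rw [extendFun, tsum_eq_single γ fun β hβ => ?_]
    have : β ∉ Function.support fun γ => ramp (x.1 γ) := by rw [h]; exact hβ
    rw [Function.notMem_support.mp this, zero_smul]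

theorem extendFun_vertex (φ : OnePoint Γ → V) (a : OnePoint Γ) :
    extendFun φ (vertex a) = φ a := by
  induction a using OnePoint.rec with
  | infty => simp [extendFun, ramp_eq_zero]
  | coe γ =>
    rw [extendFun, tsum_eq_single γ fun β hβ => by simp [vertex_coe_of_ne hβ, ramp_eq_zero]]
    simp [ramp_one]

theorem extendFun_const (v : V) (x : Ball Γ) : extendFun (fun _ => v) x = v := by
  simp [extendFun]

theorem norm_extendFun_le (φ : OnePoint Γ → V) (x : Ball Γ) {C : ℝ} (h : ∀ a, ‖φ a‖ ≤ C) :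
    ‖extendFun φ x‖ ≤ C := by
  obtain ⟨a, t, ht, hx⟩ := exists_extendFun_eq (V := V) x
  have hmem := (convex_closedBall (0 : V) C) (mem_closedBall_zero_iff.2 (h ∞))
    (mem_closedBall_zero_iff.2 (h a)) (sub_nonneg.2 ht.2) ht.1 (sub_add_cancel 1 t)
  rw [hx, mem_closedBall_zero_iff.symm]
  convert hmem using 1
  module

variable [TopologicalSpace Γ] [DiscreteTopology Γ]

theorem continuous_extendFun (φ : C(OnePoint Γ, V)) : Continuous (extendFun φ) := by
  refine continuous_const.add ?_
  set ψ : Γ → V := fun γ => φ γ - φ ∞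
  have hψ : Tendsto ψ cofinite (𝓝 0) := by
    simpa [ψ, sub_self] using
      ((OnePoint.continuous_iff_from_discrete _).1 φ.continuous).sub_const (φ ∞)
  have hunif : TendstoUniformly (fun (s : Finset Γ) x => ∑ γ ∈ s, ramp (x.1 γ) • ψ γ)
      (fun x : Ball Γ => ∑' γ, ramp (x.1 γ) • ψ γ) atTop := by
    rw [Metric.tendstoUniformly_iff]
    intro ε hε
    have hfin : {γ | ε / 2 ≤ ‖ψ γ‖}.Finite := by
      simpa using eventually_cofinite.1 (hψ.eventually (Metric.ball_mem_nhds 0 (half_pos hε)))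
    filter_upwards [eventually_ge_atTop hfin.toFinset] with s hs x
    rw [dist_eq_norm]
    refine (norm_tsum_sub_sum_le ((subsingleton_support_ramp x).anti ?_) s (half_pos hε).le
      fun γ hγ => ?_).trans_lt (half_lt_self hε)
    · exact Function.support_smul_subset_left _ _
    · rw [norm_smul, Real.norm_of_nonneg (ramp_nonneg _)]
      have : ‖ψ γ‖ < ε / 2 := lt_of_not_ge fun h => hγ (hs (hfin.mem_toFinset.2 h))
      nlinarith [ramp_le_one (apply_le_one x γ), ramp_nonneg (x.1 γ), norm_nonneg (ψ γ)]
  exact hunif.continuous (Frequently.of_forall fun s => continuous_finsetSum s fun γ _ =>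
    (continuous_ramp.comp ((continuous_apply γ).comp continuous_subtype_val)).smul continuous_const)

def extension : C(OnePoint Γ, V) →L[ℝ] C(Ball Γ, V) :=
  LinearMap.mkContinuous
    { toFun φ := ⟨extendFun φ, continuous_extendFun φ⟩
      map_add' φ ψ := by
        ext x
        obtain ⟨a, t, -, hx⟩ := exists_extendFun_eq (V := V) x
        simp only [ContinuousMap.coe_mk, ContinuousMap.add_apply, hx]
        module
      map_smul' c φ := by
        ext x
        obtain ⟨a, t, -, hx⟩ := exists_extendFun_eq (V := V) x
        simp only [ContinuousMap.coe_mk, ContinuousMap.smul_apply, hx, RingHom.id_apply]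
        module }
    1 fun φ => by
      rw [one_mul, ContinuousMap.norm_le _ (norm_nonneg φ)]
      exact fun x => norm_extendFun_le φ x fun a => φ.norm_coe_le_norm a

end Extension

variable [TopologicalSpace Γ] [DiscreteTopology Γ]

theorem continuous_vertex : Continuous (vertex (Γ := Γ)) := by
  rw [OnePoint.continuous_iff_from_discrete, tendsto_subtype_rng, tendsto_pi_nhds]
  intro β
  refine tendsto_const_nhds.congr' ?_
  filter_upwards [eventually_cofinite_ne β] with γ hγ
  exact (vertex_coe_of_ne hγ.symm).symm

def vertexPi : C(ℕ → OnePoint Γ, ℕ → Ball Γ) :=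
  ⟨fun a k => vertex (a k), continuous_pi fun k => continuous_vertex.comp (continuous_apply k)⟩

def partialExtension : ℕ → C(ℕ → OnePoint Γ, ℝ) →L[ℝ] C(ℕ → Ball Γ, ℝ)
  | 0 => ContinuousMap.compCLM ℝ ℝ (ContinuousMap.const _ fun _ => ∞)
  | n + 1 => ContinuousMap.compCLM ℝ ℝ headTail ∘L ContinuousMap.uncurryCLM ∘L extension ∘L
      (partialExtension n).compLeftContinuous ℝ (OnePoint Γ) ∘L ContinuousMap.curryCLM ∘L
      ContinuousMap.compCLM ℝ ℝ cons

theorem partialExtension_succ_apply (n : ℕ) (f : C(ℕ → OnePoint Γ, ℝ)) (x : ℕ → Ball Γ) :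
    partialExtension (n + 1) f x =
      extendFun (fun a => partialExtension n (f.comp (cons.curry a))) (x 0) fun k => x (k + 1) :=
  rfl

theorem norm_partialExtension_apply_le (n : ℕ) (f : C(ℕ → OnePoint Γ, ℝ)) :
    ‖partialExtension n f‖ ≤ ‖f‖ := by
  induction n generalizing f with
  | zero =>
    exact (ContinuousMap.norm_le _ (norm_nonneg f)).2 fun x => f.norm_coe_le_norm _
  | succ n ih =>
    refine (ContinuousMap.norm_le _ (norm_nonneg f)).2 fun x => ?_
    rw [partialExtension_succ_apply]
    refine (ContinuousMap.norm_coe_le_norm _ _).trans (norm_extendFun_le _ _ fun a => ?_)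
    exact (ih _).trans ((ContinuousMap.norm_le _ (norm_nonneg f)).2 fun y => f.norm_coe_le_norm _)

theorem partialExtension_vertexPi (n : ℕ) (f : C(ℕ → OnePoint Γ, ℝ)) (a : ℕ → OnePoint Γ) :
    partialExtension n f (vertexPi a) = f (truncate ∞ n a) := by
  induction n generalizing f a with
  | zero => rfl
  | succ n ih =>
    rw [partialExtension_succ_apply]
    change extendFun (V := C(ℕ → Ball Γ, ℝ)) _ (vertex (a 0)) _ = _
    rw [extendFun_vertex]
    refine (ih _ fun k => a (k + 1)).trans ?_
    conv_rhs => rw [← cons_headTail a]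
    exact congrArg f (truncate_succ_cons ∞ n (headTail a)).symm

theorem partialExtension_const (n : ℕ) (c : ℝ) :
    partialExtension n (ContinuousMap.const (ℕ → OnePoint Γ) c) = ContinuousMap.const _ c := by
  induction n with
  | zero => rfl
  | succ n ih =>
    ext x
    simp [partialExtension_succ_apply, ih, extendFun_const]

theorem partialExtension_comp_truncate (f : C(ℕ → OnePoint Γ, ℝ)) {n m : ℕ} (h : n ≤ m) :
    partialExtension m (f.comp (truncate ∞ n)) = partialExtension n f := by
  induction n generalizing f m with
  | zero =>
    have : f.comp (truncate ∞ 0) = ContinuousMap.const _ (f fun _ => ∞) := rfl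
    rw [this, partialExtension_const]
    rfl
  | succ n ih =>
    cases m with
    | zero => omega
    | succ m =>
      have key : ∀ a, (f.comp (truncate ∞ (n + 1))).comp (cons.curry a) =
          (f.comp (cons.curry a)).comp (truncate ∞ n) := fun a => by
        ext y; exact congrArg f (truncate_succ_cons ∞ n (a, y))
      ext x
      simp only [partialExtension_succ_apply, key, ih _ (Nat.le_of_succ_le_succ h)]

theorem dist_partialExtension_le (f : C(ℕ → OnePoint Γ, ℝ)) {n m : ℕ} (h : n ≤ m) :
    dist (partialExtension m f) (partialExtension n f) ≤ dist f (f.comp (truncate ∞ n)) := by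
  rw [← partialExtension_comp_truncate f h, dist_eq_norm, dist_eq_norm, ← map_sub]
  exact norm_partialExtension_apply_le m _

theorem cauchySeq_partialExtension (f : C(ℕ → OnePoint Γ, ℝ)) :
    CauchySeq fun n => partialExtension n f := by
  refine Metric.cauchySeq_iff'.2 fun ε hε => ?_
  obtain ⟨N, hN⟩ := ((tendsto_comp_truncate ∞ f).eventually
    (Metric.ball_mem_nhds f hε)).exists_forall_of_atTop
  exact ⟨N, fun n hn =>
    (dist_partialExtension_le f hn).trans_lt (by simpa [dist_comm] using hN N le_rfl)⟩

def extensionPi : C(ℕ → OnePoint Γ, ℝ) →L[ℝ] C(ℕ → Ball Γ, ℝ) :=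
  continuousLinearMapOfTendsto partialExtension
    (tendsto_pi_nhds.2 fun f => (cauchySeq_partialExtension f).tendsto_limUnder)

theorem tendsto_partialExtension (f : C(ℕ → OnePoint Γ, ℝ)) :
    Tendsto (fun n => partialExtension n f) atTop (𝓝 (extensionPi f)) :=
  (cauchySeq_partialExtension f).tendsto_limUnder

theorem extensionPi_vertexPi (f : C(ℕ → OnePoint Γ, ℝ)) (a : ℕ → OnePoint Γ) :
    extensionPi f (vertexPi a) = f a := by
  refine tendsto_nhds_unique
    (((continuous_eval_const (vertexPi a)).tendsto _).comp (tendsto_partialExtension f)) ?_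
  simpa [Function.comp_def, partialExtension_vertexPi] using
    ((continuous_eval_const a).tendsto _).comp (tendsto_comp_truncate ∞ f)

end Ball

theorem statement14_general {Γ : Type*} [TopologicalSpace Γ] [DiscreteTopology Γ] :
    ∃ (i : C(ℕ → OnePoint Γ, ℝ) →L[ℝ] C(ℕ → ↥(Ball Γ), ℝ))
      (r : C(ℕ → ↥(Ball Γ), ℝ) →L[ℝ] C(ℕ → OnePoint Γ, ℝ)),
      r.comp i = ContinuousLinearMap.id ℝ C(ℕ → OnePoint Γ, ℝ) :=
  ⟨Ball.extensionPi, ContinuousMap.compCLM ℝ ℝ Ball.vertexPi,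
    ContinuousLinearMap.ext fun f => ContinuousMap.ext (Ball.extensionPi_vertexPi f)⟩

/-- for uncountable `Γ`, `C(A(Γ)^ℕ)` is isomorphic to a complemented
subspace of `C(B(Γ)^ℕ)`, witnessed by operators `i, r` with `r ∘ i = id`. -/
theorem statement14 {Γ : Type*} [TopologicalSpace Γ] [DiscreteTopology Γ] [Uncountable Γ] :
    ∃ (i : C(ℕ → OnePoint Γ, ℝ) →L[ℝ] C(ℕ → ↥(Ball Γ), ℝ))
      (r : C(ℕ → ↥(Ball Γ), ℝ) →L[ℝ] C(ℕ → OnePoint Γ, ℝ)),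
      r.comp i = ContinuousLinearMap.id ℝ C(ℕ → OnePoint Γ, ℝ) :=
  statement14_general

end
end

section
/- Let Γ be a set. Then every nonempty closed subset F of B(Γ) contains a G_δ point, i.e. a point x ∈ F which is the intersection of countably many open subsets of F. (Such a point can be obtained by taking x ∈ F with ∑_{i∈Γ}|x_i| maximal.) -/
open Set Filter Topology

noncomputable section

/-!
Write `σ x = ∑ i, |x i|`. Pick `y` in a nonempty set `G ⊆ B(Γ)` with `σ y` within `η` of
`sup σ(G)`, and a finite `s ⊆ Γ` carrying all of the mass of `y` but `η`. Every `z ∈ G` that is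
`δ`-close to `y` on the coordinates in `s` (with `|s| δ ≤ η`) has mass at least `sup σ(G) - 3η`
on `s`, hence at most `3η` off `s`; so this closed G_δ box cuts out a nonempty piece of `G` of
`ℓ¹`-diameter at most `8η`. Iterating with `η → 0` inside the compact set `F` gives nested
nonempty closed sets whose intersection is a single point, a countable intersection of G_δ sets.
-/

theorem exists_isGδ_singleton_of_fragmented {X : Type*} [TopologicalSpace X] [CompactSpace X]
    [Nonempty X] (d : X → X → ℝ) (hd : ∀ z w, d z w ≤ 0 → z = w)
    (hfrag : ∀ G : Set X, IsClosed G → G.Nonempty → ∀ ε > 0, ∃ K, IsClosed K ∧ IsGδ K ∧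
      (G ∩ K).Nonempty ∧ ∀ z ∈ G ∩ K, ∀ w ∈ G ∩ K, d z w ≤ ε) :
    ∃ x : X, IsGδ {x} := by
  choose! K hKclosed hKGδ hKne hKsmall using hfrag
  let G : ℕ → Set X := fun n => Nat.rec univ (fun m Gm => Gm ∩ K Gm (1 / (m + 1))) n
  have hG_succ (n : ℕ) : G (n + 1) = G n ∩ K (G n) (1 / (n + 1)) := rfl
  have hG : ∀ n, IsClosed (G n) ∧ (G n).Nonempty ∧ IsGδ (G n) := by
    intro n
    induction n with
    | zero => exact ⟨isClosed_univ, univ_nonempty, .univ⟩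
    | succ n ih =>
      obtain ⟨hc, hne, hδ⟩ := ih
      rw [hG_succ]
      exact ⟨hc.inter (hKclosed _ hc hne _ Nat.one_div_pos_of_nat),
        hKne _ hc hne _ Nat.one_div_pos_of_nat, hδ.inter (hKGδ _ hc hne _ Nat.one_div_pos_of_nat)⟩
  have hG_anti : ∀ n, G (n + 1) ⊆ G n := fun _ => inter_subset_left
  obtain ⟨x, hx⟩ := IsCompact.nonempty_iInter_of_sequence_nonempty_isCompact_isClosed G hG_anti
    (fun n => (hG n).2.1) (hG 0).1.isCompact (fun n => (hG n).1)
  have hsingleton : (⋂ n, G n) = {x} := by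
    refine eq_singleton_iff_unique_mem.2 ⟨hx, fun z hz => hd z x ?_⟩
    refine ge_of_tendsto' tendsto_one_div_add_atTop_nhds_zero_nat fun n => ?_
    have hz' := mem_iInter.1 hz (n + 1)
    have hx' := mem_iInter.1 hx (n + 1)
    exact hKsmall _ (hG n).1 (hG n).2.1 _ Nat.one_div_pos_of_nat z hz' x hx'
  exact ⟨x, hsingleton ▸ .iInter fun n => (hG n).2.2⟩

namespace Ball

variable {Γ : Type*}

def l1dist (z w : Γ → ℝ) : ℝ := ∑' i, |z i - w i|

def box (s : Finset Γ) (y : Γ → ℝ) (δ : ℝ) : Set (Γ → ℝ) := {z | ∀ i ∈ s, |z i - y i| ≤ δ}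

theorem isClosed : IsClosed (Ball Γ) := by
  simp only [Ball, ofPred_forall]
  exact isClosed_iInter fun s =>
    isClosed_le (continuous_finsetSum s fun i _ => (continuous_apply i).abs) continuous_const

theorem isCompact : IsCompact (Ball Γ) := by
  refine (isCompact_univ_pi fun _ => isCompact_Icc (a := (-1 : ℝ)) (b := 1)).of_isClosed_subset
    isClosed fun x hx i _ => abs_le.1 ?_
  simpa using hx {i}

theorem summable_abs {y : Γ → ℝ} (hy : y ∈ Ball Γ) : Summable fun i => |y i| :=
  summable_of_sum_le (fun _ => abs_nonneg _) hy

theorem tsum_abs_le_one {y : Γ → ℝ} (hy : y ∈ Ball Γ) : ∑' i, |y i| ≤ 1 :=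
  (summable_abs hy).tsum_le_of_sum_le hy

theorem sum_abs_le_tsum {y : Γ → ℝ} (hy : y ∈ Ball Γ) (s : Finset Γ) :
    ∑ i ∈ s, |y i| ≤ ∑' i, |y i| :=
  (summable_abs hy).sum_le_tsum s fun _ _ => abs_nonneg _

theorem summable_abs_sub {z w : Γ → ℝ} (hz : z ∈ Ball Γ) (hw : w ∈ Ball Γ) :
    Summable fun i => |z i - w i| :=
  ((summable_abs hz).add (summable_abs hw)).of_nonneg_of_le (fun _ => abs_nonneg _)
    fun i => abs_sub (z i) (w i)

theorem eq_of_l1dist_nonpos {z w : Γ → ℝ} (hz : z ∈ Ball Γ) (hw : w ∈ Ball Γ)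
    (h : l1dist z w ≤ 0) : z = w := by
  funext i
  have hi : |z i - w i| ≤ l1dist z w :=
    (summable_abs_sub hz hw).le_tsum i fun _ _ => abs_nonneg _
  linarith [abs_nonneg (z i - w i), abs_le.1 (hi.trans h)]

theorem l1dist_le {z w : Γ → ℝ} (hz : z ∈ Ball Γ) (hw : w ∈ Ball Γ) (s : Finset Γ) :
    l1dist z w ≤ ∑ i ∈ s, |z i - w i| + (∑' i, |z i| - ∑ i ∈ s, |z i|)
      + (∑' i, |w i| - ∑ i ∈ s, |w i|) := by
  have hzs : Summable fun i : ↥(↑s : Set Γ)ᶜ => |z i| := (summable_abs hz).subtype _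
  have hws : Summable fun i : ↥(↑s : Set Γ)ᶜ => |w i| := (summable_abs hw).subtype _
  calc l1dist z w
      = ∑ i ∈ s, |z i - w i| + ∑' i : ↥(↑s : Set Γ)ᶜ, |z i - w i| :=
        ((summable_abs_sub hz hw).sum_add_tsum_compl).symm
    _ ≤ ∑ i ∈ s, |z i - w i| + ∑' i : ↥(↑s : Set Γ)ᶜ, (|z i| + |w i|) := by
        refine add_le_add_right ?_ _
        exact ((summable_abs_sub hz hw).subtype _).tsum_le_tsum (fun i => abs_sub _ _)
          (hzs.add hws)
    _ = _ := by
        rw [hzs.tsum_add hws, ← (summable_abs hz).sum_add_tsum_compl,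
          ← (summable_abs hw).sum_add_tsum_compl]
        ring

theorem box_eq_biInter (s : Finset Γ) (y : Γ → ℝ) (δ : ℝ) :
    box s y δ = ⋂ i ∈ s, (fun z => z i) ⁻¹' Metric.closedBall (y i) δ := by
  ext z
  simp [box, Real.dist_eq]

theorem isClosed_box (s : Finset Γ) (y : Γ → ℝ) (δ : ℝ) : IsClosed (box s y δ) :=
  box_eq_biInter s y δ ▸ isClosed_biInter fun i _ =>
    Metric.isClosed_closedBall.preimage (continuous_apply i)

theorem isGδ_box (s : Finset Γ) (y : Γ → ℝ) (δ : ℝ) : IsGδ (box s y δ) :=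
  box_eq_biInter s y δ ▸ .biInter s.countable_toSet fun i _ =>
    Metric.isClosed_closedBall.isGδ.preimage (continuous_apply i)

theorem sum_abs_sub_le_of_mem_box {s : Finset Γ} {y z w : Γ → ℝ} {δ : ℝ}
    (hz : z ∈ box s y δ) (hw : w ∈ box s y δ) : ∑ i ∈ s, |z i - w i| ≤ 2 * s.card * δ := by
  calc ∑ i ∈ s, |z i - w i| ≤ ∑ _i ∈ s, 2 * δ := Finset.sum_le_sum fun i hi => by
        have := abs_sub_le (z i) (y i) (w i)
        rw [abs_sub_comm (y i)] at this
        linarith [hz i hi, hw i hi]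
    _ = 2 * s.card * δ := by rw [Finset.sum_const, nsmul_eq_mul]; ring

theorem sum_abs_sub_card_mul_le_of_mem_box {s : Finset Γ} {y z : Γ → ℝ} {δ : ℝ}
    (hz : z ∈ box s y δ) : ∑ i ∈ s, |y i| - s.card * δ ≤ ∑ i ∈ s, |z i| := by
  calc ∑ i ∈ s, |y i| - s.card * δ = ∑ i ∈ s, (|y i| - δ) := by
        rw [Finset.sum_sub_distrib, Finset.sum_const, nsmul_eq_mul]
    _ ≤ ∑ i ∈ s, |z i| := Finset.sum_le_sum fun i hi => by
        linarith [hz i hi, abs_sub_abs_le_abs_sub (y i) (z i), abs_sub_comm (y i) (z i)]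

theorem exists_box_l1dist_le {G : Set (Γ → ℝ)} (hGB : G ⊆ Ball Γ) (hG : G.Nonempty)
    {ε : ℝ} (hε : 0 < ε) : ∃ s y δ, (G ∩ box s y δ).Nonempty ∧
      ∀ z ∈ G ∩ box s y δ, ∀ w ∈ G ∩ box s y δ, l1dist z w ≤ ε := by
  set η := ε / 8 with hη
  have hη_pos : 0 < η := by positivity
  set r := sSup ((fun y => ∑' i, |y i|) '' G)
  have hbdd : BddAbove ((fun y => ∑' i, |y i|) '' G) :=
    ⟨1, forall_mem_image.2 fun y hy => tsum_abs_le_one (hGB hy)⟩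
  obtain ⟨_, ⟨y, hyG, rfl⟩, hy⟩ :=
    exists_lt_of_lt_csSup (hG.image _) (show r - η < r by linarith)
  obtain ⟨s, hs⟩ := ((summable_abs (hGB hyG)).hasSum.eventually_mem
    (Ioi_mem_nhds (show ∑' i, |y i| - η < ∑' i, |y i| by linarith))).exists
  set δ := η / (s.card + 1)
  have hδ : s.card * δ ≤ η := by
    rw [mul_div_assoc', div_le_iff₀ (by positivity)]
    nlinarith
  have htail : ∀ z ∈ G ∩ box s y δ, ∑' i, |z i| - ∑ i ∈ s, |z i| ≤ 3 * η := by
    rintro z ⟨hzG, hz⟩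
    have : ∑' i, |z i| ≤ r := le_csSup hbdd (mem_image_of_mem _ hzG)
    linarith [sum_abs_sub_card_mul_le_of_mem_box hz, mem_Ioi.1 hs]
  refine ⟨s, y, δ, ⟨y, hyG, fun i _ => by simpa using (by positivity : 0 ≤ δ)⟩, ?_⟩
  intro z hz w hw
  linarith [l1dist_le (hGB hz.1) (hGB hw.1) s, sum_abs_sub_le_of_mem_box hz.2 hw.2, htail z hz,
    htail w hw]


theorem exists_isGδ_singleton {X : Type*} [TopologicalSpace X] [CompactSpace X] [Nonempty X]
    {f : X → Γ → ℝ} (hf : Continuous f) (hinj : Function.Injective f) (hfB : ∀ x, f x ∈ Ball Γ) :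
    ∃ x : X, IsGδ {x} := by
  refine exists_isGδ_singleton_of_fragmented (fun z w => l1dist (f z) (f w))
    (fun z w h => hinj (eq_of_l1dist_nonpos (hfB z) (hfB w) h)) fun G _ hG ε hε => ?_
  obtain ⟨s, y, δ, ⟨_, ⟨x, hxG, rfl⟩, hx⟩, hsmall⟩ :=
    exists_box_l1dist_le (image_subset_iff.2 fun x _ => hfB x) (hG.image f) hε
  exact ⟨f ⁻¹' box s y δ, (isClosed_box s y δ).preimage hf, (isGδ_box s y δ).preimage hf,
    ⟨x, hxG, hx⟩, fun z hz w hw =>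
      hsmall _ ⟨mem_image_of_mem f hz.1, hz.2⟩ _ ⟨mem_image_of_mem f hw.1, hw.2⟩⟩

end Ball

/-- every nonempty closed subset `F` of `B(Γ)` contains a `G_δ` point:
a point `x ∈ F` such that `{x}` is the intersection of countably many sets open in
the subspace `F`. -/
theorem statement19 {Γ : Type*} (F : Set ↥(Ball Γ)) (hF : IsClosed F)
    (hne : F.Nonempty) :
    ∃ (x : ↥F) (U : ℕ → Set ↥F), (∀ n, IsOpen (U n)) ∧ (⋂ n, U n) = {x} := by
  have : CompactSpace ↥(Ball Γ) := isCompact_iff_compactSpace.1 Ball.isCompact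
  have : CompactSpace ↥F := isCompact_iff_compactSpace.1 hF.isCompact
  have : Nonempty ↥F := hne.to_subtype
  obtain ⟨x, hx⟩ := Ball.exists_isGδ_singleton (f := fun z : ↥F => z.1.1)
    (continuous_subtype_val.comp continuous_subtype_val)
    (Subtype.val_injective.comp Subtype.val_injective) fun z => z.1.2
  obtain ⟨U, hU, hxU⟩ := hx.eq_iInter_nat
  exact ⟨x, U, hU, hxU.symm⟩

end
end
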